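/- With the setup of the previous construction (interval graph G on n = 2^k vertices, ordering f, and indifference graphs I₁,…,I_k built from the dyadic partitions), if (u,v) ∉ E(G) then there exists i with 1 ≤ i ≤ k such that (u,v) ∉ E(I_i). Consequently E(G) = E(I₁) ∩ ⋯ ∩ E(I_k). -/

import Mathlib

/-- The rank of a vertex under an ordering f : V ≃ Fin n, as an element of {1,…,n}. -/
def rk {V : Type*} {n : ℕ} (f : V ≃ Fin n) (v : V) : ℕ := (f v : ℕ) + 1

/-- B_i : the vertices whose rank lies in an even-indexed block of the i-th dyadic
partition, i.e. ⌈rk(v)/2^(i-1)⌉ is even. -/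
def Bblk {V : Type*} [Fintype V] [DecidableEq V] {n : ℕ} (f : V ≃ Fin n) (i : ℕ) :
    Finset V :=
  Finset.univ.filter (fun v => ((rk f v + 2 ^ (i - 1) - 1) / 2 ^ (i - 1)) % 2 = 0)

/-- t = max{f(x) : x ∈ N(v) ∩ B_i}. -/
def tmax {V : Type*} [Fintype V] [DecidableEq V] {n : ℕ} (G : SimpleGraph V)
    [DecidableRel G.Adj] (f : V ≃ Fin n) (i : ℕ) (v : V) : ℕ :=
  (G.neighborFinset v ∩ Bblk f i).sup (rk f)

/-- The interval Π_i(v) of the construction. -/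
noncomputable def PiInt {V : Type*} [Fintype V] [DecidableEq V] {n : ℕ}
    (G : SimpleGraph V) [DecidableRel G.Adj] (f : V ≃ Fin n) (i : ℕ) (v : V) :
    Set ℝ :=
  if v ∈ Bblk f i then Set.Icc ((n : ℝ) + rk f v) (2 * n + rk f v)
  else if (G.neighborFinset v ∩ Bblk f i).Nonempty then
    Set.Icc ((tmax G f i v : ℝ)) ((n : ℝ) + tmax G f i v)
  else Set.Icc (0 : ℝ) (n : ℝ)

/-- The intersection graph I_i of the intervals Π_i. -/
noncomputable def Igraph {V : Type*} [Fintype V] [DecidableEq V] {n : ℕ}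
    (G : SimpleGraph V) [DecidableRel G.Adj] (f : V ≃ Fin n) (i : ℕ) :
    SimpleGraph V where
  Adj u v := u ≠ v ∧ (PiInt G f i u ∩ PiInt G f i v).Nonempty
  symm := by
    constructor
    intro u v h
    exact ⟨h.1.symm, by rw [Set.inter_comm]; exact h.2⟩
  loopless := by
    constructor
    intro u h
    exact h.1 rfl

/-!
Every `Π_i(v)` is an interval of length `n`, so `u, v` are adjacent in `I_i` iff the left
endpoints of their intervals differ by at most `n`. For an edge `uv` of `G` this always holds:
if `u ∈ A_i` and `v ∈ B_i`, then `v` is a `B_i`-neighbour of `u`, so `f(v) ≤ t ≤ n`.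

For a non-edge with `f(u) < f(v)`, take the most significant bit in which `f(u) - 1` and
`f(v) - 1` differ; at the corresponding level `i` we get `u ∈ A_i` and `v ∈ B_i`. By the
interval property of `f`, every neighbour of `u` precedes `v`, so `t < f(v)` and `Π_i(u)`
ends at `n + t < n + f(v)`, before `Π_i(v)` starts.
-/

theorem Nat.exists_div_two_pow_mod_two_of_lt {k a b : ℕ} (hab : a < b) (hb : b < 2 ^ k) :
    ∃ i < k, a / 2 ^ i % 2 = 0 ∧ b / 2 ^ i % 2 = 1 := by
  induction k generalizing a b with
  | zero => rw [pow_zero] at hb; omega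
  | succ k ih =>
    rcases (Nat.div_le_div_right (c := 2) hab.le).lt_or_eq with hlt | heq
    · obtain ⟨i, hik, ha, hb⟩ := ih hlt (by rw [pow_succ] at hb; omega)
      refine ⟨i + 1, by omega, ?_, ?_⟩ <;> rwa [pow_succ', ← Nat.div_div_eq_div_mul]
    · exact ⟨0, by omega, by omega, by omega⟩

theorem Set.Icc_add_inter_Icc_add_nonempty_iff {α : Type*} [AddCommGroup α] [LinearOrder α]
    [IsOrderedAddMonoid α] {a b c : α} :
    (Icc a (a + c) ∩ Icc b (b + c)).Nonempty ↔ |a - b| ≤ c := by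
  rw [Icc_inter_Icc, nonempty_Icc, sup_le_iff, le_inf_iff, le_inf_iff]
  constructor
  · rintro ⟨⟨_, hab⟩, hba, _⟩
    exact abs_sub_le_iff.2 ⟨sub_le_iff_le_add'.2 hab, sub_le_iff_le_add'.2 hba⟩
  · intro h
    have hc : 0 ≤ c := (abs_nonneg _).trans h
    obtain ⟨hab, hba⟩ := abs_sub_le_iff.1 h
    exact ⟨⟨le_add_of_nonneg_right hc, sub_le_iff_le_add'.1 hab⟩,
      sub_le_iff_le_add'.1 hba, le_add_of_nonneg_right hc⟩

lemma rk_le {V : Type*} {n : ℕ} (f : V ≃ Fin n) (v : V) : rk f v ≤ n := (f v).isLt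

section DyadicIntervals

variable {V : Type*} [Fintype V] [DecidableEq V] {n : ℕ} (G : SimpleGraph V) [DecidableRel G.Adj]
  (f : V ≃ Fin n) (i : ℕ)

lemma mem_bblk_succ_iff (v : V) : v ∈ Bblk f (i + 1) ↔ (f v : ℕ) / 2 ^ i % 2 = 1 := by
  have hpos : 0 < 2 ^ i := Nat.two_pow_pos i
  have hnum : (f v : ℕ) + 1 + 2 ^ i - 1 = (f v : ℕ) + 2 ^ i := by omega
  simp only [Bblk, rk, Finset.mem_filter, Finset.mem_univ, true_and, Nat.add_sub_cancel, hnum,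
    Nat.add_div_right _ hpos]
  omega

lemma tmax_le (v : V) : tmax G f i v ≤ n :=
  Finset.sup_le fun x _ => rk_le f x

lemma rk_le_tmax {u v : V} (h : G.Adj v u) (hu : u ∈ Bblk f i) : rk f u ≤ tmax G f i v :=
  Finset.le_sup (Finset.mem_inter.2 ⟨(G.mem_neighborFinset v u).2 h, hu⟩)

lemma tmax_lt_rk_of_not_adj
    (hf : ∀ u v w : V, (f u : ℕ) < (f w : ℕ) → (f w : ℕ) < (f v : ℕ) → G.Adj u v → G.Adj u w)
    {u v : V} (huv : ¬ G.Adj u v) (hlt : (f u : ℕ) < f v) : tmax G f i u < rk f v := by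
  refine (Finset.sup_lt_iff (Nat.succ_pos _)).2 fun x hx => ?_
  have hux : G.Adj u x := (G.mem_neighborFinset u x).1 (Finset.mem_inter.1 hx).1
  rcases lt_trichotomy (f x : ℕ) (f v) with h | h | h
  · exact Nat.succ_lt_succ h
  · exact absurd (f.injective (Fin.ext h) ▸ hux) huv
  · exact absurd (hf u x v hlt h hux) huv

/-- The left endpoint of `Π_i(v)`; the case `Π_i(v) = [0, n]` is covered by `t = 0`, the
supremum of the empty set. -/
def piLeft (v : V) : ℕ := if v ∈ Bblk f i then n + rk f v else tmax G f i v

lemma piInt_eq_Icc (v : V) :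
    PiInt G f i v = Set.Icc (piLeft G f i v : ℝ) (piLeft G f i v + n) := by
  unfold PiInt piLeft
  split_ifs with hB hN
  · push_cast
    congr 1
    ring
  · rw [add_comm]
  · rw [tmax, Finset.not_nonempty_iff_eq_empty.1 hN, Finset.sup_empty]
    simp

lemma igraph_adj_iff {u v : V} :
    (Igraph G f i).Adj u v ↔ u ≠ v ∧ |(piLeft G f i u : ℝ) - piLeft G f i v| ≤ n := by
  change u ≠ v ∧ _ ↔ _
  rw [piInt_eq_Icc, piInt_eq_Icc, Set.Icc_add_inter_Icc_add_nonempty_iff]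

lemma igraph_adj_of_adj {u v : V} (h : G.Adj u v) : (Igraph G f i).Adj u v := by
  have bounds : ∀ w, (rk f w : ℝ) ≤ n ∧ (tmax G f i w : ℝ) ≤ n := fun w =>
    ⟨by exact_mod_cast rk_le f w, by exact_mod_cast tmax_le G f i w⟩
  refine (igraph_adj_iff G f i).2 ⟨h.ne, ?_⟩
  obtain ⟨hu, htu⟩ := bounds u
  obtain ⟨hv, htv⟩ := bounds v
  rw [abs_sub_le_iff]
  unfold piLeft
  split_ifs with hBu hBv hBv
  · push_cast; constructor <;> linarith
  · have : (rk f u : ℝ) ≤ tmax G f i v := by exact_mod_cast rk_le_tmax G f i h.symm hBu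
    push_cast; constructor <;> linarith
  · have : (rk f v : ℝ) ≤ tmax G f i u := by exact_mod_cast rk_le_tmax G f i h hBv
    push_cast; constructor <;> linarith
  · constructor <;> linarith [(Nat.cast_nonneg (tmax G f i u) : (0 : ℝ) ≤ _),
      (Nat.cast_nonneg (tmax G f i v) : (0 : ℝ) ≤ _)]

lemma not_igraph_adj_of_not_adj
    (hf : ∀ u v w : V, (f u : ℕ) < (f w : ℕ) → (f w : ℕ) < (f v : ℕ) → G.Adj u v → G.Adj u w)
    {u v : V} (huv : ¬ G.Adj u v) (hlt : (f u : ℕ) < f v)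
    (hu : u ∉ Bblk f i) (hv : v ∈ Bblk f i) : ¬ (Igraph G f i).Adj u v := by
  have ht : (tmax G f i u : ℝ) < rk f v := by
    exact_mod_cast tmax_lt_rk_of_not_adj G f i hf huv hlt
  rw [igraph_adj_iff, piLeft, piLeft, if_neg hu, if_pos hv, abs_sub_le_iff]
  push_cast
  rintro ⟨-, -, h⟩
  linarith

end DyadicIntervals

lemma exists_not_igraph_adj {V : Type*} [Fintype V] [DecidableEq V] {k : ℕ}
    (G : SimpleGraph V) [DecidableRel G.Adj] (f : V ≃ Fin (2 ^ k))
    (hf : ∀ u v w : V, (f u : ℕ) < (f w : ℕ) → (f w : ℕ) < (f v : ℕ) → G.Adj u v → G.Adj u w)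
    {u v : V} (hne : u ≠ v) (huv : ¬ G.Adj u v) :
    ∃ i, 1 ≤ i ∧ i ≤ k ∧ ¬ (Igraph G f i).Adj u v := by
  wlog hlt : (f u : ℕ) < f v generalizing u v
  · have hvu : (f v : ℕ) < f u :=
      lt_of_le_of_ne (not_lt.1 hlt) fun h => hne (f.injective (Fin.ext h)).symm
    obtain ⟨i, h1, hik, hi⟩ := this hne.symm (fun h => huv h.symm) hvu
    exact ⟨i, h1, hik, fun h => hi h.symm⟩
  obtain ⟨i, hik, hu, hv⟩ := Nat.exists_div_two_pow_mod_two_of_lt hlt (f v).isLt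
  refine ⟨i + 1, by omega, hik, not_igraph_adj_of_not_adj G f _ hf huv hlt ?_ ?_⟩
  · rw [mem_bblk_succ_iff]; omega
  · rwa [mem_bblk_succ_iff]

/-- if (u,v) ∉ E(G) then some I_i, 1 ≤ i ≤ k, misses (u,v);
consequently E(G) = E(I_1) ∩ ⋯ ∩ E(I_k). -/
theorem stmt9 {V : Type*} [Fintype V] [DecidableEq V] (k : ℕ)
    (G : SimpleGraph V) [DecidableRel G.Adj]
    (f : V ≃ Fin (2 ^ k))
    (hf : ∀ u v w : V, (f u : ℕ) < (f w : ℕ) → (f w : ℕ) < (f v : ℕ) →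
      G.Adj u v → G.Adj u w) :
    (∀ u v : V, u ≠ v → ¬ G.Adj u v →
      ∃ i, 1 ≤ i ∧ i ≤ k ∧ ¬ (Igraph G f i).Adj u v) ∧
    (∀ u v : V, G.Adj u v ↔
      (u ≠ v ∧ ∀ i, 1 ≤ i → i ≤ k → (Igraph G f i).Adj u v)) := by
  refine ⟨fun u v => exists_not_igraph_adj G f hf, fun u v => ⟨fun h => ?_, ?_⟩⟩
  · exact ⟨h.ne, fun i _ _ => igraph_adj_of_adj G f i h⟩
  · rintro ⟨hne, hall⟩
    by_contra huv
    obtain ⟨i, h1, hik, hi⟩ := exists_not_igraph_adj G f hf hne huv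
    exact hi (hall i h1 hik)
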